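/- Marginalization of the Bell/Pauli distribution under partial trace: for a density matrix ρ on N qubits and any Pauli string P on the first N−1 qubits, Σ_{m=0}^{3} q_ρ(P ⊗ σ_m) = q_{tr_N(ρ)}(P) · (1/2) · 2, i.e. q_{tr_N ρ}(P) = Σ_m q_ρ(P ⊗ σ_m) where q on k qubits is q_τ(Q) = 2^{-k} tr(τQτQ). -/

import Mathlib

open Matrix BigOperators
open scoped ComplexOrder

/-- The four single-qubit Pauli matrices `I, σx, σy, σz`. -/
noncomputable def pauli : Fin 4 → Matrix (Fin 2) (Fin 2) ℂ :=
  ![1, !![0, 1; 1, 0], !![0, -Complex.I; Complex.I, 0], !![1, 0; 0, -1]]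

/-- The `N`-qubit Pauli string `⊗_k σ_{s k}` as a matrix on `(ℂ²)^⊗N`. -/
noncomputable def PauliString {N : ℕ} (s : Fin N → Fin 4) :
    Matrix (Fin N → Fin 2) (Fin N → Fin 2) ℂ :=
  Matrix.of fun i j => ∏ k, pauli (s k) (i k) (j k)

/-- The distribution `q_τ(Q) = 2^{-k} tr(τQτQ)` over `k`-qubit Pauli strings. -/
noncomputable def qDist {k : ℕ} (τ : Matrix (Fin k → Fin 2) (Fin k → Fin 2) ℂ)
    (s : Fin k → Fin 4) : ℝ :=
  ((τ * PauliString s * τ * PauliString s).trace.re) / (2 : ℝ) ^ k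

/-- Partial trace over the last qubit of an `(N+1)`-qubit operator. -/
noncomputable def trLast {N : ℕ}
    (ρ : Matrix (Fin (N + 1) → Fin 2) (Fin (N + 1) → Fin 2) ℂ) :
    Matrix (Fin N → Fin 2) (Fin N → Fin 2) ℂ :=
  Matrix.of fun i j => ∑ m : Fin 2, ρ (Fin.snoc i m) (Fin.snoc j m)


private theorem trace_mul4' {n : Type*} [Fintype n] (A B C D : Matrix n n ℂ) :
    (A * B * C * D).trace = ∑ a, ∑ b, ∑ c, ∑ d, A a b * B b c * C c d * D d a := by
  simp only [Matrix.trace, Matrix.diag, Matrix.mul_apply, Finset.sum_mul]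
  refine Finset.sum_congr rfl fun a _ => ?_
  rw [Finset.sum_comm]
  exact (Finset.sum_congr rfl fun c _ => Finset.sum_comm).trans Finset.sum_comm

private def bigEquiv' (N : ℕ) :
    (((Fin N → Fin 2) × (Fin N → Fin 2) × (Fin N → Fin 2) × (Fin N → Fin 2)) ×
      (Fin 2 × Fin 2 × Fin 2 × Fin 2)) ≃
    ((Fin (N + 1) → Fin 2) × (Fin (N + 1) → Fin 2) × (Fin (N + 1) → Fin 2) ×
      (Fin (N + 1) → Fin 2)) where
  toFun p := (Fin.snoc p.1.1 p.2.1, Fin.snoc p.1.2.1 p.2.2.1,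
    Fin.snoc p.1.2.2.1 p.2.2.2.1, Fin.snoc p.1.2.2.2 p.2.2.2.2)
  invFun q := ((Fin.init q.1, Fin.init q.2.1, Fin.init q.2.2.1, Fin.init q.2.2.2),
    (q.1 (Fin.last N), q.2.1 (Fin.last N), q.2.2.1 (Fin.last N), q.2.2.2 (Fin.last N)))
  left_inv p := by simp [Fin.init_snoc]
  right_inv q := by simp [Fin.snoc_init_self]

private theorem trace4_snoc' {N : ℕ}
    (A B C D : Matrix (Fin (N + 1) → Fin 2) (Fin (N + 1) → Fin 2) ℂ) :
    (A * B * C * D).trace =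
      ∑ i : Fin N → Fin 2, ∑ j : Fin N → Fin 2, ∑ k : Fin N → Fin 2,
        ∑ l : Fin N → Fin 2, ∑ x : Fin 2, ∑ y : Fin 2, ∑ z : Fin 2, ∑ w : Fin 2,
        A (Fin.snoc i x) (Fin.snoc j y) * B (Fin.snoc j y) (Fin.snoc k z) *
        C (Fin.snoc k z) (Fin.snoc l w) * D (Fin.snoc l w) (Fin.snoc i x) := by
  rw [trace_mul4']
  rw [show (∑ a, ∑ b, ∑ c, ∑ d, A a b * B b c * C c d * D d a) =
      ∑ q : (Fin (N + 1) → Fin 2) × (Fin (N + 1) → Fin 2) × (Fin (N + 1) → Fin 2) ×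
        (Fin (N + 1) → Fin 2),
        A q.1 q.2.1 * B q.2.1 q.2.2.1 * C q.2.2.1 q.2.2.2 * D q.2.2.2 q.1 by
    simp [Fintype.sum_prod_type]]
  rw [← Equiv.sum_comp (bigEquiv' N)]
  simp [Fintype.sum_prod_type, bigEquiv']

private theorem pstring_snoc' {N : ℕ} (P : Fin N → Fin 4) (m : Fin 4) (i j : Fin N → Fin 2)
    (x y : Fin 2) :
    PauliString (Fin.snoc P m) (Fin.snoc i x) (Fin.snoc j y) =
      PauliString P i j * pauli m x y := by
  simp [PauliString, Fin.prod_univ_castSucc]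

private theorem sum4_swap' {ι : Type*} [Fintype ι] (f : Fin 4 → ι → ℂ) :
    ∑ m : Fin 4, ∑ i, f m i = ∑ i, ∑ m : Fin 4, f m i := Finset.sum_comm

private theorem key' {N : ℕ} (ρ : Matrix (Fin (N + 1) → Fin 2) (Fin (N + 1) → Fin 2) ℂ)
    (P : Fin N → Fin 4) :
    ∑ m : Fin 4, (ρ * PauliString (Fin.snoc P m) * ρ * PauliString (Fin.snoc P m)).trace
      = 2 * (trLast ρ * PauliString P * trLast ρ * PauliString P).trace := by
  conv_rhs => rw [trace_mul4']
  simp only [trace4_snoc', pstring_snoc']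
  simp only [sum4_swap']
  rw [Finset.mul_sum]
  refine Finset.sum_congr rfl fun i _ => ?_
  rw [Finset.mul_sum]
  refine Finset.sum_congr rfl fun j _ => ?_
  rw [Finset.mul_sum]
  refine Finset.sum_congr rfl fun k _ => ?_
  rw [Finset.mul_sum]
  refine Finset.sum_congr rfl fun l _ => ?_
  simp only [trLast, Matrix.of_apply, Fin.sum_univ_two, Fin.sum_univ_four, pauli,
    Matrix.one_apply, Matrix.cons_val_zero, Matrix.cons_val_one, Matrix.head_cons,
    Matrix.head_fin_const, Matrix.cons_val_fin_one, Matrix.cons_val', Matrix.empty_val']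
  norm_num
  ring_nf
  simp [Matrix.cons_val]
  ring_nf
  simp only [Complex.I_sq]
  ring

/-- Marginalization of the distribution `q` under partial trace:
`q_{tr_N ρ}(P) = Σ_{m=0}^{3} q_ρ(P ⊗ σ_m)` for any Pauli string `P` on the remaining
qubits. -/
theorem qDist_marginal {N : ℕ}
    (ρ : Matrix (Fin (N + 1) → Fin 2) (Fin (N + 1) → Fin 2) ℂ)
    (hpsd : ρ.PosSemidef) (htr : ρ.trace = 1) (P : Fin N → Fin 4) :
    qDist (trLast ρ) P = ∑ m : Fin 4, qDist ρ (Fin.snoc P m) := by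
  have h := key' ρ P
  simp only [qDist]
  rw [← Finset.sum_div, ← Complex.re_sum, h]
  simp only [Complex.mul_re, Complex.re_ofNat, Complex.im_ofNat, pow_succ]
  ring
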